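/- Let c(V,W) := det(d_V^W) where d_V^W is the square matrix associated to representations V, W with ⟨dim V, dim W⟩ = 0. Given a short exact sequence 0 → V' → V → V'' → 0 of representations with ⟨dim V', dim W⟩ = 0 (hence also ⟨dim V'', dim W⟩ = 0), one has c(V,W) = c(V',W)·c(V'',W). -/

import Mathlib

/-!
A short exact sequence `0 → V' → V → V'' → 0` splits vertexwise, so
`V(a) = [[V'(a), B(a)], [0, V''(a)]]`. Writing a family of maps `φ : V → W` as `(φ', φ'')`,
`d_V^W (φ', φ'') = (d_{V'}^W φ', d_{V''}^W φ'' - φ' B)`. Hence in block-adapted bases the matrix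
of `d_V^W` is block lower triangular with diagonal blocks the matrices of `d_{V'}^W` and
`d_{V''}^W`, and the determinant factors.
-/

open Matrix

/-- The map `d_V^W : ⊕_x Hom(V(x), W(x)) → ⊕_a Hom(V(ta), W(ha))`,
`(φ(x))_x ↦ (W(a) φ(ta) - φ(ha) V(a))_a`, for matrix representations over arbitrary
(finite) index families `σ` (for `V`) and `ρ` (for `W`). -/
noncomputable def dmap {K : Type*} [Field K] {n : ℕ} {A : Type*}
    (ta ha : A → Fin n) (ρ σ : Fin n → Type*)
    [∀ x, Fintype (ρ x)] [∀ x, Fintype (σ x)]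
    (V : ∀ a : A, Matrix (σ (ha a)) (σ (ta a)) K)
    (W : ∀ a : A, Matrix (ρ (ha a)) (ρ (ta a)) K) :
    (∀ x : Fin n, Matrix (ρ x) (σ x) K) →ₗ[K]
      (∀ a : A, Matrix (ρ (ha a)) (σ (ta a)) K) where
  toFun φ := fun a => W a * φ (ta a) - φ (ha a) * V a
  map_add' φ ψ := by
    funext a
    simp [Matrix.mul_add, Matrix.add_mul]
    abel
  map_smul' c φ := by
    funext a
    simp [Matrix.mul_smul, Matrix.smul_mul, smul_sub]

open Module

theorem Module.Basis.eq_map_prod {R M₁ M₂ M ι₁ ι₂ : Type*} [Semiring R]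
    [AddCommMonoid M₁] [Module R M₁] [AddCommMonoid M₂] [Module R M₂]
    [AddCommMonoid M] [Module R M] (b₁ : Basis ι₁ R M₁) (b₂ : Basis ι₂ R M₂)
    (e : (M₁ × M₂) ≃ₗ[R] M) (b : Basis (ι₁ ⊕ ι₂) R M)
    (hb₁ : ∀ i, b (.inl i) = e (b₁ i, 0)) (hb₂ : ∀ i, b (.inr i) = e (0, b₂ i)) :
    b = (b₁.prod b₂).map e := by
  refine Basis.eq_of_apply_eq fun i => ?_
  cases i <;> simp [hb₁, hb₂, Basis.prod_apply]

theorem LinearMap.det_toMatrix_prod_of_blockTriangular {R M₁ M₂ N₁ N₂ ι₁ ι₂ : Type*}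
    [CommRing R] [AddCommMonoid M₁] [Module R M₁] [AddCommMonoid M₂] [Module R M₂]
    [AddCommMonoid N₁] [Module R N₁] [AddCommMonoid N₂] [Module R N₂]
    [Fintype ι₁] [DecidableEq ι₁] [Fintype ι₂] [DecidableEq ι₂]
    (b₁ : Basis ι₁ R M₁) (b₂ : Basis ι₂ R M₂) (c₁ : Basis ι₁ R N₁) (c₂ : Basis ι₂ R N₂)
    (f : M₁ × M₂ →ₗ[R] N₁ × N₂) (f₁ : M₁ →ₗ[R] N₁) (f₂ : M₂ →ₗ[R] N₂)
    (hf₁ : ∀ x, (f (x, 0)).1 = f₁ x) (hf₂ : ∀ y, f (0, y) = (0, f₂ y)) :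
    (toMatrix (b₁.prod b₂) (c₁.prod c₂) f).det =
      (toMatrix b₁ c₁ f₁).det * (toMatrix b₂ c₂ f₂).det := by
  set M := toMatrix (b₁.prod b₂) (c₁.prod c₂) f
  have h₁₁ : M.toBlocks₁₁ = toMatrix b₁ c₁ f₁ := by
    ext j i
    simp [M, toBlocks₁₁, toMatrix_apply, Basis.prod_repr_inl, Basis.prod_apply, hf₁]
  have h₁₂ : M.toBlocks₁₂ = 0 := by
    ext j i
    simp [M, toBlocks₁₂, toMatrix_apply, Basis.prod_repr_inl, Basis.prod_apply, hf₂]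
  have h₂₂ : M.toBlocks₂₂ = toMatrix b₂ c₂ f₂ := by
    ext j i
    simp [M, toBlocks₂₂, toMatrix_apply, Basis.prod_repr_inr, Basis.prod_apply, hf₂]
  rw [← fromBlocks_toBlocks M, h₁₂, det_fromBlocks_zero₁₂, h₁₁, h₂₂]

def fromColsLinearEquiv (R : Type*) [Semiring R] {X : Type*} (ρ σ τ : X → Type*) :
    ((∀ x, Matrix (ρ x) (σ x) R) × (∀ x, Matrix (ρ x) (τ x) R)) ≃ₗ[R]
      ∀ x, Matrix (ρ x) (σ x ⊕ τ x) R where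
  toFun p x := fromCols (p.1 x) (p.2 x)
  invFun φ := (fun x => (φ x).toCols₁, fun x => (φ x).toCols₂)
  map_add' p q := by ext x i (j | j) <;> rfl
  map_smul' r p := by ext x i (j | j) <;> rfl
  left_inv p := by ext x i j <;> rfl
  right_inv φ := by ext x i (j | j) <;> rfl

theorem dmap_fromBlocks {K : Type*} [Field K] {n : ℕ} {A : Type*}
    (ta ha : A → Fin n) (ρ σ τ : Fin n → Type*)
    [∀ x, Fintype (ρ x)] [∀ x, Fintype (σ x)] [∀ x, Fintype (τ x)]
    (V' : ∀ a : A, Matrix (σ (ha a)) (σ (ta a)) K)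
    (V'' : ∀ a : A, Matrix (τ (ha a)) (τ (ta a)) K)
    (B : ∀ a : A, Matrix (σ (ha a)) (τ (ta a)) K)
    (W : ∀ a : A, Matrix (ρ (ha a)) (ρ (ta a)) K)
    (φ : ∀ x, Matrix (ρ x) (σ x) K) (ψ : ∀ x, Matrix (ρ x) (τ x) K) :
    dmap ta ha ρ (fun x => σ x ⊕ τ x) (fun a => fromBlocks (V' a) (B a) 0 (V'' a)) W
        (fromColsLinearEquiv K ρ σ τ (φ, ψ)) =
      fromColsLinearEquiv K (fun a => ρ (ha a)) (fun a => σ (ta a)) (fun a => τ (ta a))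
        (dmap ta ha ρ σ V' W φ, dmap ta ha ρ τ V'' W ψ - fun a => φ (ha a) * B a) := by
  funext a
  ext i (j | j) <;>
    simp [fromColsLinearEquiv, dmap, mul_fromCols, fromCols_mul_fromBlocks, sub_sub, add_comm]

theorem schofield_multiplicative_ses_general {K : Type*} [Field K] {n : ℕ} {A : Type*}
    (ta ha : A → Fin n) (α' α'' β : Fin n → ℕ)
    (V' : ∀ a : A, Matrix (Fin (α' (ha a))) (Fin (α' (ta a))) K)
    (V'' : ∀ a : A, Matrix (Fin (α'' (ha a))) (Fin (α'' (ta a))) K)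
    (B : ∀ a : A, Matrix (Fin (α' (ha a))) (Fin (α'' (ta a))) K)
    (W : ∀ a : A, Matrix (Fin (β (ha a))) (Fin (β (ta a))) K)
    {ι' ι'' : Type*} [Fintype ι'] [DecidableEq ι'] [Fintype ι''] [DecidableEq ι'']
    (b' : Module.Basis ι' K (∀ x : Fin n, Matrix (Fin (β x)) (Fin (α' x)) K))
    (c' : Module.Basis ι' K (∀ a : A, Matrix (Fin (β (ha a))) (Fin (α' (ta a))) K))
    (b'' : Module.Basis ι'' K (∀ x : Fin n, Matrix (Fin (β x)) (Fin (α'' x)) K))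
    (c'' : Module.Basis ι'' K (∀ a : A, Matrix (Fin (β (ha a))) (Fin (α'' (ta a))) K))
    (b : Module.Basis (ι' ⊕ ι'') K
      (∀ x : Fin n, Matrix (Fin (β x)) (Fin (α' x) ⊕ Fin (α'' x)) K))
    (c : Module.Basis (ι' ⊕ ι'') K
      (∀ a : A, Matrix (Fin (β (ha a))) (Fin (α' (ta a)) ⊕ Fin (α'' (ta a))) K))
    (hb1 : ∀ i x, b (Sum.inl i) x = Matrix.fromCols (b' i x) 0)
    (hb2 : ∀ i x, b (Sum.inr i) x = Matrix.fromCols 0 (b'' i x))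
    (hc1 : ∀ i a, c (Sum.inl i) a = Matrix.fromCols (c' i a) 0)
    (hc2 : ∀ i a, c (Sum.inr i) a = Matrix.fromCols 0 (c'' i a)) :
    (LinearMap.toMatrix b c
        (dmap ta ha (fun x => Fin (β x)) (fun x => Fin (α' x) ⊕ Fin (α'' x))
          (fun a => Matrix.fromBlocks (V' a) (B a) 0 (V'' a)) W)).det =
      (LinearMap.toMatrix b' c'
          (dmap ta ha (fun x => Fin (β x)) (fun x => Fin (α' x)) V' W)).det *
        (LinearMap.toMatrix b'' c''
          (dmap ta ha (fun x => Fin (β x)) (fun x => Fin (α'' x)) V'' W)).det := by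
  have hb := b'.eq_map_prod b'' (fromColsLinearEquiv K _ _ _) b
    (fun i => funext (hb1 i)) (fun i => funext (hb2 i))
  have hc := c'.eq_map_prod c'' (fromColsLinearEquiv K _ _ _) c
    (fun i => funext (hc1 i)) (fun i => funext (hc2 i))
  rw [hb, hc, LinearMap.toMatrix_map_left, LinearMap.toMatrix_map_right]
  apply LinearMap.det_toMatrix_prod_of_blockTriangular
  · intro φ
    simp [dmap_fromBlocks]
  · intro ψ
    simp [dmap_fromBlocks, ← Pi.zero_def]

/-- Multiplicativity of the Schofield semi-invariant `c(V, W) = det d_V^W` on short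
exact sequences: if `0 → V' → V → V'' → 0` is exact (encoded: `V` is block
upper-triangular with diagonal blocks `V'`, `V''`), `⟨dim V', dim W⟩ = 0` and
`⟨dim V'', dim W⟩ = 0`, then, computing the determinants with respect to compatible
(block-adapted) bases, `c(V, W) = c(V', W) · c(V'', W)`. -/
theorem schofield_multiplicative_ses {K : Type*} [Field K] {n : ℕ} {A : Type*}
    [Fintype A] (ta ha : A → Fin n) (α' α'' β : Fin n → ℕ)
    (V' : ∀ a : A, Matrix (Fin (α' (ha a))) (Fin (α' (ta a))) K)
    (V'' : ∀ a : A, Matrix (Fin (α'' (ha a))) (Fin (α'' (ta a))) K)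
    (B : ∀ a : A, Matrix (Fin (α' (ha a))) (Fin (α'' (ta a))) K)
    (W : ∀ a : A, Matrix (Fin (β (ha a))) (Fin (β (ta a))) K)
    (hEuler' : (∑ x : Fin n, (α' x : ℤ) * (β x : ℤ)) -
        (∑ a : A, (α' (ta a) : ℤ) * (β (ha a) : ℤ)) = 0)
    (hEuler'' : (∑ x : Fin n, (α'' x : ℤ) * (β x : ℤ)) -
        (∑ a : A, (α'' (ta a) : ℤ) * (β (ha a) : ℤ)) = 0)
    {ι' ι'' : Type*} [Fintype ι'] [DecidableEq ι'] [Fintype ι''] [DecidableEq ι'']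
    (b' : Module.Basis ι' K (∀ x : Fin n, Matrix (Fin (β x)) (Fin (α' x)) K))
    (c' : Module.Basis ι' K (∀ a : A, Matrix (Fin (β (ha a))) (Fin (α' (ta a))) K))
    (b'' : Module.Basis ι'' K (∀ x : Fin n, Matrix (Fin (β x)) (Fin (α'' x)) K))
    (c'' : Module.Basis ι'' K (∀ a : A, Matrix (Fin (β (ha a))) (Fin (α'' (ta a))) K))
    (b : Module.Basis (ι' ⊕ ι'') K
      (∀ x : Fin n, Matrix (Fin (β x)) (Fin (α' x) ⊕ Fin (α'' x)) K))
    (c : Module.Basis (ι' ⊕ ι'') K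
      (∀ a : A, Matrix (Fin (β (ha a))) (Fin (α' (ta a)) ⊕ Fin (α'' (ta a))) K))
    (hb1 : ∀ i x, b (Sum.inl i) x = Matrix.fromCols (b' i x) 0)
    (hb2 : ∀ i x, b (Sum.inr i) x = Matrix.fromCols 0 (b'' i x))
    (hc1 : ∀ i a, c (Sum.inl i) a = Matrix.fromCols (c' i a) 0)
    (hc2 : ∀ i a, c (Sum.inr i) a = Matrix.fromCols 0 (c'' i a)) :
    (LinearMap.toMatrix b c
        (dmap ta ha (fun x => Fin (β x)) (fun x => Fin (α' x) ⊕ Fin (α'' x))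
          (fun a => Matrix.fromBlocks (V' a) (B a) 0 (V'' a)) W)).det =
      (LinearMap.toMatrix b' c'
          (dmap ta ha (fun x => Fin (β x)) (fun x => Fin (α' x)) V' W)).det *
        (LinearMap.toMatrix b'' c''
          (dmap ta ha (fun x => Fin (β x)) (fun x => Fin (α'' x)) V'' W)).det :=
  schofield_multiplicative_ses_general ta ha α' α'' β V' V'' B W b' c' b'' c'' b c hb1 hb2 hc1 hc2
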